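/- For every n ≥ 2, in the scenario [(2 n),(2 2 … 2)]: (i) every local behavior P satisfies I_n(P) ≥ 0, and (ii) there exist n(n+2) local behaviors P^{(1)},…,P^{(n(n+2))}, each satisfying I_n(P^{(i)}) = 0, which are affinely independent as points of the real vector space indexed by the coordinates P(ab|xy). (Since the local polytope of this scenario has affine dimension n(n+2), this means the inequality I_n(P) ≥ 0 defines a facet of the local polytope.) -/

import Mathlib

/-!
Bell scenario [(2 n),(2 2 … 2)]: party A has two measurements, measurement `1` with
outcomes `{1,2}` and measurement `2` with outcomes `{1,…,n}`; party B has `n`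
measurements, each with outcomes `{1,2}`.  A behavior is given by a pair of families
`P1 : Fin n → Fin 2 → Fin 2 → ℝ` and `P2 : Fin n → Fin n → Fin 2 → ℝ`, where
`P1 y a b = P(ab|1y)` and `P2 y a b = P(ab|2y)`.  The paper's label `k ∈ {1,…,n}`
(for measurements of B and for outcomes of A's second measurement) corresponds to the
index `k-1`, and the labels `1`,`2` correspond to the indices `0`,`1`.
-/

/-- The behavior `(P1, P2)` is a convex combination of deterministic behaviors
`P(ab|xy) = δ_{a,α_x} δ_{b,β_y}` with `α_1 : Fin 2`, `α_2 : Fin n`, `β : Fin n → Fin 2`. -/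
def IsLocal2n {n : ℕ} (P1 : Fin n → Fin 2 → Fin 2 → ℝ)
    (P2 : Fin n → Fin n → Fin 2 → ℝ) : Prop :=
  ∃ q : Fin 2 → Fin n → (Fin n → Fin 2) → ℝ,
    (∀ α₁ α₂ β, 0 ≤ q α₁ α₂ β) ∧
    (∑ α₁, ∑ α₂, ∑ β, q α₁ α₂ β) = 1 ∧
    (∀ (y : Fin n) (a b : Fin 2),
      P1 y a b = ∑ α₁, ∑ α₂, ∑ β,
        q α₁ α₂ β * (if α₁ = a then 1 else 0) * (if β y = b then 1 else 0)) ∧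
    (∀ (y : Fin n) (a : Fin n) (b : Fin 2),
      P2 y a b = ∑ α₁, ∑ α₂, ∑ β,
        q α₁ α₂ β * (if α₂ = a then 1 else 0) * (if β y = b then 1 else 0))

/-- The Bell expression
`I_n(P) = P_A(1|1) + Σ_{k=1}^{n−1} P_B(1|k) − Σ_{k=1}^{n} P(11|1k) − Σ_{k=1}^{n−1} P(k1|2k)
          + Σ_{k=1}^{n−1} P(k1|2n)`,
where the marginals are computed as `P_A(1|1) = Σ_b P(1b|1 1)` and
`P_B(1|k) = Σ_a P(a1|1k)` (well-defined choices for local behaviors). -/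
noncomputable def BellIn (n : ℕ) (hn : 2 ≤ n) (P1 : Fin n → Fin 2 → Fin 2 → ℝ)
    (P2 : Fin n → Fin n → Fin 2 → ℝ) : ℝ :=
  (∑ b, P1 ⟨0, by omega⟩ 0 b)
  + (∑ k : Fin (n - 1), ∑ a, P1 (Fin.castLE (Nat.sub_le n 1) k) a 0)
  - (∑ y : Fin n, P1 y 0 0)
  - (∑ k : Fin (n - 1),
      P2 (Fin.castLE (Nat.sub_le n 1) k) (Fin.castLE (Nat.sub_le n 1) k) 0)
  + (∑ k : Fin (n - 1), P2 ⟨n - 1, by omega⟩ (Fin.castLE (Nat.sub_le n 1) k) 0)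

/-!
On a deterministic behavior `(α₁, α₂, β)` the expression `I_n` equals `1 − [β(α₂) = 1]` when
`α₁ = 1`, and the number of measurements `y ≠ α₂` with `β(y) = 1` when `α₁ = 2`. Being linear,
`I_n` is therefore nonnegative on the whole local polytope. For each outcome `K` of `A`'s second
measurement, the deterministic behaviors with `α₂ = K` and either `α₁ = 1`, `β⁻¹(1) = {K, j}`
(`j` arbitrary), or `α₁ = 2`, `β⁻¹(1) ∈ {{K}, ∅}` saturate it. These `n(n+2)` points are even
linearly independent: ordering them suitably, each one is the only remaining point with a
nonzero value at some coordinate `P(ab|xy)`.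
-/

namespace InFacet

abbrev Behavior (n : ℕ) : Type :=
  (Fin n → Fin 2 → Fin 2 → ℝ) × (Fin n → Fin n → Fin 2 → ℝ)

def deterministic {n : ℕ} (α₁ : Fin 2) (α₂ : Fin n) (β : Fin n → Fin 2) : Behavior n :=
  (fun y a b => (if α₁ = a then 1 else 0) * (if β y = b then 1 else 0),
   fun y a b => (if α₂ = a then 1 else 0) * (if β y = b then 1 else 0))

lemma isLocal2n_iff {n : ℕ} (P : Behavior n) :
    IsLocal2n P.1 P.2 ↔ ∃ q : Fin 2 → Fin n → (Fin n → Fin 2) → ℝ,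
      (∀ α₁ α₂ β, 0 ≤ q α₁ α₂ β) ∧ (∑ α₁, ∑ α₂, ∑ β, q α₁ α₂ β) = 1 ∧
      P = ∑ α₁, ∑ α₂, ∑ β, q α₁ α₂ β • deterministic α₁ α₂ β := by
  have hsum : ∀ q : Fin 2 → Fin n → (Fin n → Fin 2) → ℝ,
      (P = ∑ α₁, ∑ α₂, ∑ β, q α₁ α₂ β • deterministic α₁ α₂ β) ↔
      ((∀ y a b, P.1 y a b = ∑ α₁, ∑ α₂, ∑ β,
          q α₁ α₂ β * (if α₁ = a then 1 else 0) * (if β y = b then 1 else 0)) ∧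
        ∀ y a b, P.2 y a b = ∑ α₁, ∑ α₂, ∑ β,
          q α₁ α₂ β * (if α₂ = a then 1 else 0) * (if β y = b then 1 else 0)) := by
    intro q
    simp only [Prod.ext_iff, funext_iff, Prod.fst_sum, Prod.snd_sum, Finset.sum_apply,
      Prod.smul_fst, Prod.smul_snd, Pi.smul_apply, smul_eq_mul, deterministic, mul_assoc]
  simp only [hsum]
  rfl

lemma isLocal2n_deterministic {n : ℕ} (α₁ : Fin 2) (α₂ : Fin n) (β : Fin n → Fin 2) :
    IsLocal2n (deterministic α₁ α₂ β).1 (deterministic α₁ α₂ β).2 := by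
  refine (isLocal2n_iff _).2
    ⟨fun a b c => if a = α₁ ∧ b = α₂ ∧ c = β then 1 else 0, fun _ _ _ => by positivity, ?_, ?_⟩
  · simp [ite_and]
  · simp [ite_and, ite_smul]

noncomputable def bellInₗ (n : ℕ) (hn : 2 ≤ n) : Behavior n →ₗ[ℝ] ℝ where
  toFun P := BellIn n hn P.1 P.2
  map_add' P Q := by
    simp only [BellIn, Prod.fst_add, Prod.snd_add, Pi.add_apply, Finset.sum_add_distrib]
    ring
  map_smul' c P := by
    simp only [BellIn, Prod.smul_fst, Prod.smul_snd, Pi.smul_apply, smul_eq_mul,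
      ← Finset.mul_sum, RingHom.id_apply]
    ring

lemma bellIn_nonneg_of_forall_deterministic {n : ℕ} (hn : 2 ≤ n)
    (h : ∀ α₁ α₂ β, 0 ≤ BellIn n hn (deterministic α₁ α₂ β).1 (deterministic α₁ α₂ β).2)
    {P1 : Fin n → Fin 2 → Fin 2 → ℝ} {P2 : Fin n → Fin n → Fin 2 → ℝ} (hP : IsLocal2n P1 P2) :
    0 ≤ BellIn n hn P1 P2 := by
  obtain ⟨q, hq, -, hPq⟩ := (isLocal2n_iff (P1, P2)).1 hP
  have : BellIn n hn P1 P2 = bellInₗ n hn (P1, P2) := rfl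
  rw [this, hPq]
  simp only [map_sum, map_smul, smul_eq_mul]
  exact Finset.sum_nonneg fun a _ => Finset.sum_nonneg fun b _ => Finset.sum_nonneg fun c _ =>
    mul_nonneg (hq a b c) (h a b c)

lemma bellIn_succ {m : ℕ} (hn : 2 ≤ m + 1) (P1 : Fin (m + 1) → Fin 2 → Fin 2 → ℝ)
    (P2 : Fin (m + 1) → Fin (m + 1) → Fin 2 → ℝ) :
    BellIn (m + 1) hn P1 P2 = ∑ b, P1 0 0 b + ∑ k : Fin m, ∑ a, P1 k.castSucc a 0
      - ∑ y, P1 y 0 0 - ∑ k : Fin m, P2 k.castSucc k.castSucc 0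
      + ∑ k : Fin m, P2 (Fin.last m) k.castSucc 0 :=
  rfl

lemma sum_ite_eq_castSucc {m : ℕ} {M : Type*} [AddCommMonoid M] (x : Fin (m + 1))
    (g : Fin (m + 1) → M) (hg : g (Fin.last m) = 0) :
    ∑ k : Fin m, (if x = k.castSucc then g k.castSucc else 0) = g x := by
  have := Fin.sum_univ_castSucc fun y => if x = y then g y else 0
  simp only [Finset.sum_ite_eq, Finset.mem_univ, if_true, hg, ite_self, add_zero] at this
  exact this.symm

lemma bellIn_deterministic {m : ℕ} (hn : 2 ≤ m + 1) (α₁ : Fin 2) (α₂ : Fin (m + 1))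
    (β : Fin (m + 1) → Fin 2) :
    BellIn (m + 1) hn (deterministic α₁ α₂ β).1 (deterministic α₁ α₂ β).2 =
      if α₁ = 0 then 1 - (if β α₂ = 0 then 1 else 0)
      else ∑ y ∈ Finset.univ.erase α₂, if β y = 0 then 1 else 0 := by
  set z : Fin (m + 1) → ℝ := fun y => if β y = 0 then 1 else 0
  set A : ℝ := if α₁ = 0 then 1 else 0
  have h1 : ∑ b, (deterministic α₁ α₂ β).1 0 0 b = A := by
    simp [deterministic, A, Finset.sum_ite_eq]
  have h2 : ∀ y, ∑ a, (deterministic α₁ α₂ β).1 y a 0 = z y := by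
    simp [deterministic, z, Finset.sum_ite_eq]
  have h3 : ∀ y, (deterministic α₁ α₂ β).1 y 0 0 = A * z y := fun _ => rfl
  have h4 : ∀ y a, (deterministic α₁ α₂ β).2 y a 0 =
      if α₂ = a then z y else 0 := by
    simp only [deterministic, ite_mul, one_mul, zero_mul, z, implies_true]
  have hdiff : ∑ k : Fin m, (if α₂ = k.castSucc then z k.castSucc else 0)
      - ∑ k : Fin m, (if α₂ = k.castSucc then z (Fin.last m) else 0) = z α₂ - z (Fin.last m) := by
    rw [← Finset.sum_sub_distrib, ← sum_ite_eq_castSucc α₂ (fun y => z y - z (Fin.last m))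
      (sub_self _)]
    exact Finset.sum_congr rfl fun k _ => by split_ifs <;> simp
  rw [bellIn_succ]
  simp only [h1, h2, h3, h4, ← Finset.mul_sum, Fin.sum_univ_castSucc (f := z)]
  rw [Finset.sum_erase_eq_sub (Finset.mem_univ _), Fin.sum_univ_castSucc (f := z)]
  change _ = if α₁ = 0 then 1 - z α₂ else _ - z α₂
  by_cases hα₁ : α₁ = 0 <;> simp only [A, hα₁, if_true, if_false] <;> linarith

lemma bellIn_deterministic_nonneg {m : ℕ} (hn : 2 ≤ m + 1) (α₁ : Fin 2) (α₂ : Fin (m + 1))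
    (β : Fin (m + 1) → Fin 2) :
    0 ≤ BellIn (m + 1) hn (deterministic α₁ α₂ β).1 (deterministic α₁ α₂ β).2 := by
  rw [bellIn_deterministic]
  split_ifs
  · norm_num
  · norm_num
  · exact Finset.sum_nonneg fun _ _ => by positivity

def facetPoint {n : ℕ} : Fin n × (Fin n ⊕ Bool) → Behavior n
  | (K, .inl j) => deterministic 0 K fun y => if y = K ∨ y = j then 0 else 1
  | (K, .inr c) => deterministic 1 K fun y => if y = K ∧ c = true then 0 else 1

lemma isLocal2n_facetPoint {n : ℕ} (i : Fin n × (Fin n ⊕ Bool)) :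
    IsLocal2n (facetPoint i).1 (facetPoint i).2 := by
  rcases i with ⟨K, j | c⟩ <;> exact isLocal2n_deterministic _ _ _

lemma bellIn_facetPoint {m : ℕ} (hn : 2 ≤ m + 1) (i : Fin (m + 1) × (Fin (m + 1) ⊕ Bool)) :
    BellIn (m + 1) hn (facetPoint i).1 (facetPoint i).2 = 0 := by
  rcases i with ⟨K, j | c⟩ <;> rw [facetPoint, bellIn_deterministic]
  · simp
  · refine Finset.sum_eq_zero fun y hy => ?_
    simp [(Finset.mem_erase.1 hy).1]

lemma eq_zero_of_sum_mul_eq_zero {ι R : Type*} [Fintype ι] [Semiring R] [NoZeroDivisors R]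
    {g f : ι → R} (i₀ : ι)
    (h : ∑ i, g i * f i = 0) (h₀ : f i₀ ≠ 0) (hne : ∀ i ≠ i₀, g i * f i = 0) : g i₀ = 0 := by
  rw [Finset.sum_eq_single i₀ (fun i _ hi => hne i hi) (by simp)] at h
  exact (mul_eq_zero.1 h).resolve_right h₀

lemma linearIndependent_facetPoint {n : ℕ} : LinearIndependent ℝ (facetPoint (n := n)) := by
  refine Fintype.linearIndependent_iff.2 fun g hg => ?_
  have coord1 : ∀ y a b, ∑ i, g i * (facetPoint i).1 y a b = 0 := fun y a b => by
    simpa [Prod.fst_sum, Finset.sum_apply] using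
      congr_fun (congr_fun (congr_fun (congr_arg Prod.fst hg) y) a) b
  have coord2 : ∀ y a b, ∑ i, g i * (facetPoint i).2 y a b = 0 := fun y a b => by
    simpa [Prod.snd_sum, Finset.sum_apply] using
      congr_fun (congr_fun (congr_fun (congr_arg Prod.snd hg) y) a) b
  have hoff : ∀ K j, j ≠ K → g (K, .inl j) = 0 := fun K j hjK => by
    refine eq_zero_of_sum_mul_eq_zero _ (coord2 j K 0) (by simp [facetPoint, deterministic]) ?_
    rintro ⟨K', j' | c⟩ hi <;> simp [facetPoint, deterministic] at hi ⊢ <;> aesop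
  have hinl : ∀ K j, g (K, .inl j) = 0 := fun K j => by
    obtain rfl | hjK := eq_or_ne j K
    · refine eq_zero_of_sum_mul_eq_zero _ (coord1 j 0 0) (by simp [facetPoint, deterministic]) ?_
      rintro ⟨K', j' | c⟩ hi <;> simp [facetPoint, deterministic] at hi ⊢
      aesop
    · exact hoff K j hjK
  have hinr : ∀ K c, g (K, .inr c) = 0 := by
    rintro K (_ | _)
    · refine eq_zero_of_sum_mul_eq_zero _ (coord2 K K 1) (by simp [facetPoint, deterministic]) ?_
      rintro ⟨K', j' | c⟩ hi <;> simp [facetPoint, deterministic] at hi ⊢ <;> aesop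
    · refine eq_zero_of_sum_mul_eq_zero _ (coord2 K K 0) (by simp [facetPoint, deterministic]) ?_
      rintro ⟨K', j' | c⟩ hi <;> simp [facetPoint, deterministic] at hi ⊢ <;> aesop
  rintro ⟨K, j | c⟩
  exacts [hinl K j, hinr K c]

end InFacet

/-- Theorem 4 of the paper: for every `n ≥ 2`, in the scenario
[(2 n),(2 2 … 2)], (i) every local behavior `P` satisfies `I_n(P) ≥ 0`, and (ii) there
exist `n(n+2)` local behaviors saturating the inequality (`I_n = 0`) that are affinely
independent as points of the real vector space indexed by the coordinates `P(ab|xy)`.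
(Since the local polytope of this scenario has affine dimension `n(n+2)`, this means
that `I_n ≥ 0` defines a facet of the local polytope.) -/
theorem In_is_facet
    (n : ℕ) (hn : 2 ≤ n) :
    (∀ (P1 : Fin n → Fin 2 → Fin 2 → ℝ) (P2 : Fin n → Fin n → Fin 2 → ℝ),
      IsLocal2n P1 P2 → 0 ≤ BellIn n hn P1 P2) ∧
    (∃ pts : Fin (n * (n + 2)) →
        (Fin n → Fin 2 → Fin 2 → ℝ) × (Fin n → Fin n → Fin 2 → ℝ),
      (∀ i, IsLocal2n (pts i).1 (pts i).2) ∧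
      (∀ i, BellIn n hn (pts i).1 (pts i).2 = 0) ∧
      AffineIndependent ℝ pts) := by
  obtain ⟨m, rfl⟩ : ∃ m, n = m + 1 := ⟨n - 1, by omega⟩
  let e : Fin (m + 1) × (Fin (m + 1) ⊕ Bool) ≃ Fin ((m + 1) * (m + 1 + 2)) :=
    Fintype.equivFinOfCardEq (by simp)
  refine ⟨fun P1 P2 => InFacet.bellIn_nonneg_of_forall_deterministic hn
      (InFacet.bellIn_deterministic_nonneg hn), InFacet.facetPoint ∘ e.symm,
    fun i => InFacet.isLocal2n_facetPoint _, fun i => InFacet.bellIn_facetPoint hn _, ?_⟩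
  exact (InFacet.linearIndependent_facetPoint.comp _ e.symm.injective).affineIndependent
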